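/- For every n ≥ 1 and every k with 0 ≤ k ≤ n, the number of labeled plane trees with n edges having exactly k improper edges equals binom(n, k) · (2n-1)!!. -/

import Mathlib

/-- A plane tree with labeled vertices: a root label together with an ordered
list of child subtrees.  (A plane tree is a rooted tree in which the children
of each node are linearly ordered.) -/
inductive LTree : Type where
  | node : ℕ → List LTree → LTree

namespace LTree

/-- The label of the root. -/
def rootLabel : LTree → ℕ
  | node a _ => a

/-- The list of child subtrees of the root. -/
def children : LTree → List LTree
  | node _ cs => cs

/-- `deg_T(root)`: the number of children of the root. -/
def rootDeg (t : LTree) : ℕ := (children t).length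

mutual
  /-- The list of all vertex labels of a tree. -/
  def labels : LTree → List ℕ
    | node a cs => a :: labelsList cs
  /-- The list of all vertex labels of a forest. -/
  def labelsList : List LTree → List ℕ
    | [] => []
    | c :: rest => labels c ++ labelsList rest
end

/-- `β(v)`: the smallest label occurring in the subtree `t` rooted at `v`. -/
def minLabel (t : LTree) : ℕ := (labels t).foldr min (rootLabel t)

/-- `min { j, β(c₁), …, β(cₖ) }` for a vertex `j` and a list of subtrees `c₁, …, cₖ`. -/
def minOver (j : ℕ) (rest : List LTree) : ℕ := (rest.map minLabel).foldr min j

mutual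
  /-- The list of edges of a tree, each recorded as a (parent label, child label)
  pair, in depth-first order. -/
  def edgeList : LTree → List (ℕ × ℕ)
    | node a cs => edgeListAux a cs
  def edgeListAux : ℕ → List LTree → List (ℕ × ℕ)
    | _, [] => []
    | a, c :: rest => (a, rootLabel c) :: (edgeList c ++ edgeListAux a rest)
end

mutual
  /-- The list of improper edges of a tree: if a vertex `j` has children
  `j₁, …, jₖ` (ordered left to right), the edge `(j, jᵢ)` is improper when
  `β(jᵢ) < min { j, β(j_{i+1}), …, β(jₖ) }`. -/
  def improperEdges : LTree → List (ℕ × ℕ)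
    | node a cs => improperEdgesAux a cs
  def improperEdgesAux : ℕ → List LTree → List (ℕ × ℕ)
    | _, [] => []
    | j, c :: rest =>
        (if minLabel c < minOver j rest then [(j, rootLabel c)] else [])
          ++ improperEdges c ++ improperEdgesAux j rest
end

mutual
  /-- The list of proper (i.e. non-improper) edges of a tree. -/
  def properEdges : LTree → List (ℕ × ℕ)
    | node a cs => properEdgesAux a cs
  def properEdgesAux : ℕ → List LTree → List (ℕ × ℕ)
    | _, [] => []
    | j, c :: rest =>
        (if minLabel c < minOver j rest then [] else [(j, rootLabel c)])
          ++ properEdges c ++ properEdgesAux j rest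
end

/-- `impr T`: the number of improper edges of `T`. -/
def impr (t : LTree) : ℕ := (improperEdges t).length

/-- `prop T`: the number of proper edges of `T`. -/
def propCount (t : LTree) : ℕ := (properEdges t).length

/-- The number of edges of `T`. -/
def edgeCount (t : LTree) : ℕ := (edgeList t).length

/-- `T` is a labeled plane tree with `n` edges: its `n + 1` vertices are labeled
bijectively with `{1, 2, …, n + 1}`. -/
def IsLPT (n : ℕ) (t : LTree) : Prop := (labels t).Perm (List.range' 1 (n + 1))

/-- `T` is increasing: vertex labels increase along every path from the root. -/
inductive Increasing : LTree → Prop where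
  | node (a : ℕ) (cs : List LTree) :
      (∀ c ∈ cs, a < rootLabel c) → (∀ c ∈ cs, Increasing c) → Increasing (node a cs)

end LTree

/-!
Removing the first subtree of the root splits a tree labeled by `s` into a tree labeled by some
`A ⊆ s` and a tree labeled by `s \ A`, and the removed root edge is improper exactly when `A`
contains `min s`. So the polynomial `P s = ∑ X ^ impr T` satisfies
`P s = ∑_A (X if min s ∈ A else 1) * P A * P (s \ A)`, and exchanging `A` with `s \ A` turns this
into `(1 + X) * ∑_{A ∋ min s} P A * P (s \ A)`. By induction, `P s = (1 + X) ^ n * (2n - 1)‼` when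
`s` has `n + 1` elements, the double factorials being matched by the convolution
`∑_{i + j = n} C(n + 1, i) (2i - 1)‼ (2j - 1)‼ = (2n + 1)‼`. The `k`-th coefficient is the claim.
-/

open Finset Polynomial
open scoped Nat

theorem List.le_foldr_min_iff {α : Type*} [LinearOrder α] {l : List α} {a x : α} :
    x ≤ l.foldr min a ↔ x ≤ a ∧ ∀ y ∈ l, x ≤ y := by
  induction l with
  | nil => simp
  | cons b l ih => simp only [List.foldr_cons, le_min_iff, ih, List.forall_mem_cons]; tauto

theorem List.foldr_min_mem_cons {α : Type*} [LinearOrder α] (l : List α) (a : α) :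
    l.foldr min a ∈ a :: l := by
  induction l with
  | nil => simp
  | cons b l ih =>
    rw [List.foldr_cons]
    rcases min_choice b (l.foldr min a) with h | h <;> rw [h]
    · simp
    · simp only [List.mem_cons] at ih ⊢
      tauto

theorem Finset.sum_powerset_insert_ite_mem_mul {α R : Type*} [DecidableEq α] [CommSemiring R]
    {s : Finset α} {m : α} (hm : m ∉ s) (f : Finset α → R) (x : R) :
    ∑ A ∈ (insert m s).powerset, (if m ∈ A then x else 1) * (f A * f (insert m s \ A)) =
      (x + 1) * ∑ B ∈ s.powerset, f (insert m B) * f (s \ B) := by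
  have hmB {B : Finset α} (hB : B ∈ s.powerset) : m ∉ B := fun h => hm (mem_powerset.1 hB h)
  have hfst : ∑ B ∈ s.powerset, (if m ∈ B then x else 1) * (f B * f (insert m s \ B)) =
      ∑ B ∈ s.powerset, f (insert m B) * f (s \ B) := by
    refine sum_nbij' (s \ ·) (s \ ·) (by simp) (by simp) (fun B hB => ?_) (fun B hB => ?_)
      (fun B hB => ?_)
    · exact sdiff_sdiff_eq_self (mem_powerset.1 hB)
    · exact sdiff_sdiff_eq_self (mem_powerset.1 hB)
    · rw [if_neg (hmB hB), one_mul, insert_sdiff_of_notMem _ (hmB hB),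
        sdiff_sdiff_eq_self (mem_powerset.1 hB), mul_comm]
  have hsnd : ∑ B ∈ s.powerset, (if m ∈ insert m B then x else 1) *
      (f (insert m B) * f (insert m s \ insert m B)) =
      x * ∑ B ∈ s.powerset, f (insert m B) * f (s \ B) := by
    rw [mul_sum]
    refine sum_congr rfl fun B hB => ?_
    rw [if_pos (mem_insert_self m B), insert_sdiff_insert, sdiff_insert_of_notMem hm]
  rw [sum_powerset_insert hm, hfst, hsnd]
  ring

/-- The `p.1 = 0` and `p.2 = 0` terms use `(2 * 0 - 1)‼ = 0‼ = 1`, the convention `(-1)‼ = 1`. -/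
theorem Nat.sum_antidiagonal_choose_mul_doubleFactorial (n : ℕ) :
    ∑ p ∈ antidiagonal n, (n + 1).choose p.1 * ((2 * p.1 - 1)‼ * (2 * p.2 - 1)‼) =
      (2 * n + 1)‼ := by
  induction n with
  | zero => rfl
  | succ n ih =>
    set b : ℕ × ℕ → ℕ := fun p => (2 * p.1 - 1)‼ * (2 * p.2 - 1)‼ with hb
    have hpascal : ∀ p ∈ antidiagonal n,
        (n + 2).choose (p.1 + 1) * ((2 * (p.1 + 1) - 1)‼ * (2 * p.2 - 1)‼) =
          (2 * p.1 + 1) * ((n + 1).choose p.1 * b p) +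
            (2 * p.1 + 1) * (n + 1).choose (p.1 + 1) * b p := fun p _ => by
      rw [Nat.choose_succ_succ, show 2 * (p.1 + 1) - 1 = 2 * p.1 + 1 by omega,
        doubleFactorial_add_one]
      ring
    have hswap : ∑ p ∈ antidiagonal n, (2 * p.1 + 1) * (n + 1).choose (p.1 + 1) * b p =
        ∑ p ∈ antidiagonal n, (2 * p.2 + 1) * ((n + 1).choose p.1 * b p) := by
      rw [← Finset.Nat.sum_antidiagonal_swap]
      refine sum_congr rfl fun p hp => ?_
      rw [Prod.fst_swap,
        Nat.choose_symm_of_eq_add (by rw [← mem_antidiagonal.1 hp]; ring : n + 1 = p.2 + 1 + p.1)]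
      simp only [hb, Prod.fst_swap, Prod.snd_swap]
      ring
    have hsum : ∑ p ∈ antidiagonal n, ((2 * p.1 + 1) * ((n + 1).choose p.1 * b p) +
        (2 * p.2 + 1) * ((n + 1).choose p.1 * b p)) = (2 * n + 2) * (2 * n + 1)‼ := by
      rw [← ih, mul_sum]
      refine sum_congr rfl fun p hp => ?_
      rw [← add_mul, ← mem_antidiagonal.1 hp]
      ring
    rw [Finset.Nat.sum_antidiagonal_succ, sum_congr rfl hpascal, sum_add_distrib, hswap,
      ← sum_add_distrib, hsum, show 2 * (n + 1) + 1 = 2 * n + 1 + 2 by ring,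
      doubleFactorial_add_two]
    simp only [choose_zero_right, mul_zero, zero_tsub, doubleFactorial, one_mul,
      show 2 * (n + 1) - 1 = 2 * n + 1 by omega]
    ring

namespace LTree

lemma node_rootLabel_children (t : LTree) : node (rootLabel t) (children t) = t := by
  cases t; rfl

lemma labels_eq (t : LTree) : labels t = rootLabel t :: labelsList (children t) := by
  cases t; simp [labels, rootLabel, children]

lemma mem_labelsList {x : ℕ} {cs : List LTree} :
    x ∈ labelsList cs ↔ ∃ c ∈ cs, x ∈ labels c := by
  induction cs with
  | nil => simp [labelsList]
  | cons c cs ih => simp [labelsList, ih]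

lemma labelsList_eq_nil {cs : List LTree} : labelsList cs = [] ↔ cs = [] := by
  cases cs with
  | nil => simp [labelsList]
  | cons c cs => simp [labelsList, labels_eq]

lemma le_minLabel_iff {t : LTree} {x : ℕ} : x ≤ minLabel t ↔ ∀ y ∈ labels t, x ≤ y := by
  rw [minLabel, List.le_foldr_min_iff, labels_eq]
  simp only [List.forall_mem_cons]
  tauto

lemma minLabel_mem (t : LTree) : minLabel t ∈ labels t := by
  rcases List.mem_cons.1 (List.foldr_min_mem_cons (labels t) (rootLabel t)) with h | h
  · rw [minLabel, h, labels_eq]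
    exact List.mem_cons_self
  · exact h

lemma minOver_eq_minLabel (t : LTree) : minOver (rootLabel t) (children t) = minLabel t := by
  refine eq_of_forall_le_iff fun x => ?_
  simp only [minOver, List.le_foldr_min_iff, List.forall_mem_map, le_minLabel_iff,
    labels_eq t, List.forall_mem_cons, mem_labelsList]
  aesop

def prepend (c : LTree) : LTree → LTree
  | node a cs => node a (c :: cs)

lemma coe_labels_prepend (c t : LTree) :
    (labels (prepend c t) : Multiset ℕ) = labels c + labels t := by
  cases t with
  | node a cs =>
    simpa [prepend, labels, labelsList] using List.perm_middle.symm

lemma prepend_inj {c c' t t' : LTree} (h : prepend c t = prepend c' t') : c = c' ∧ t = t' := by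
  cases t; cases t'
  simp only [prepend, node.injEq, List.cons.injEq] at h
  obtain ⟨rfl, rfl, rfl⟩ := h
  exact ⟨rfl, rfl⟩

lemma exists_prepend_eq {t : LTree} (h : children t ≠ []) : ∃ c t', prepend c t' = t := by
  obtain ⟨a, _ | ⟨c, cs⟩⟩ := t
  · exact absurd rfl h
  · exact ⟨c, node a cs, rfl⟩

lemma impr_prepend (c t : LTree) :
    impr (prepend c t) = (if minLabel c < minLabel t then 1 else 0) + impr c + impr t := by
  rw [← minOver_eq_minLabel t]
  cases t with
  | node a cs =>
    simp only [prepend, impr, improperEdges, improperEdgesAux, rootLabel, children]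
    by_cases h : minLabel c < minOver a cs
    · simp [h]; omega
    · simp [h]

def treesOn (s : Finset ℕ) : Set LTree := {t | (labels t : Multiset ℕ) = s.val}

lemma mem_treesOn {s : Finset ℕ} {t : LTree} : t ∈ treesOn s ↔ (labels t : Multiset ℕ) = s.val :=
  Iff.rfl

lemma mem_of_mem_treesOn {s : Finset ℕ} {t : LTree} (ht : t ∈ treesOn s) {x : ℕ} :
    x ∈ labels t ↔ x ∈ s := by
  rw [← Multiset.mem_coe, ht, Finset.mem_val]

lemma isLeast_minLabel {s : Finset ℕ} {t : LTree} (ht : t ∈ treesOn s) :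
    IsLeast (s : Set ℕ) (minLabel t) :=
  ⟨(mem_of_mem_treesOn ht).1 (minLabel_mem t),
    fun y hy => le_minLabel_iff.1 le_rfl y ((mem_of_mem_treesOn ht).2 hy)⟩

lemma treesOn_empty : treesOn ∅ = ∅ := by
  ext t
  simp [mem_treesOn, labels_eq]

lemma treesOn_singleton (a : ℕ) : treesOn {a} = {node a []} := by
  ext t
  simp only [mem_treesOn, Set.mem_singleton_iff, Finset.singleton_val, labels_eq t]
  constructor
  · intro h
    have hnil : labelsList (children t) = [] := by simpa using congrArg Multiset.card h
    rw [hnil] at h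
    have hroot : rootLabel t = a := by simpa using h
    rw [← node_rootLabel_children t, hroot, labelsList_eq_nil.1 hnil]
  · rintro rfl
    rfl

lemma children_ne_nil {s : Finset ℕ} {t : LTree} (ht : t ∈ treesOn s) (hs : 1 < s.card) :
    children t ≠ [] := by
  intro h
  have := congrArg Multiset.card ht
  simp [labels_eq t, h, labelsList] at this
  omega

lemma prepend_mem_treesOn_iff {s : Finset ℕ} {c t : LTree} :
    prepend c t ∈ treesOn s ↔ ∃ A ⊆ s, c ∈ treesOn A ∧ t ∈ treesOn (s \ A) := by
  simp only [mem_treesOn, coe_labels_prepend]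
  constructor
  · intro h
    have hnd : (labels c : Multiset ℕ).Nodup :=
      Multiset.nodup_of_le (Multiset.le_add_right _ _) (h ▸ s.nodup)
    refine ⟨⟨labels c, hnd⟩, Finset.val_le_iff.1 (h ▸ Multiset.le_add_right _ _), rfl, ?_⟩
    rw [Finset.sdiff_val, ← h, add_tsub_cancel_left]
  · rintro ⟨A, hA, hc, ht⟩
    rw [hc, ht, Finset.sdiff_val, add_tsub_cancel_of_le (Finset.val_le_iff.2 hA)]

lemma minLabel_lt_minLabel_iff {s A : Finset ℕ} {m : ℕ} {c t : LTree} (hA : A ⊆ s)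
    (hm : IsLeast (s : Set ℕ) m) (hc : c ∈ treesOn A) (ht : t ∈ treesOn (s \ A)) :
    minLabel c < minLabel t ↔ m ∈ A := by
  have hcA := isLeast_minLabel hc
  have htA := isLeast_minLabel ht
  by_cases hmA : m ∈ A
  · have hmc : minLabel c = m := hcA.unique ⟨hmA, fun y hy => hm.2 (hA hy)⟩
    have htA' := Finset.mem_sdiff.1 htA.1
    simp only [hmA, iff_true, hmc]
    exact lt_of_le_of_ne (hm.2 htA'.1) fun h => htA'.2 (h ▸ hmA)
  · simp only [hmA, iff_false, not_lt]
    exact (htA.2 (Finset.mem_sdiff.2 ⟨hm.1, hmA⟩)).trans (hm.2 (hA hcA.1))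

lemma treesOn_subset_iUnion_prepend {s : Finset ℕ} (hs : 1 < s.card) :
    treesOn s ⊆ ⋃ A ∈ s.powerset,
      (fun p : LTree × LTree => prepend p.1 p.2) '' (treesOn A ×ˢ treesOn (s \ A)) := by
  intro t ht
  obtain ⟨c, t', rfl⟩ := exists_prepend_eq (children_ne_nil ht hs)
  obtain ⟨A, hA, hc, ht'⟩ := prepend_mem_treesOn_iff.1 ht
  exact Set.mem_biUnion (Finset.mem_coe.2 (Finset.mem_powerset.2 hA)) ⟨(c, t'), ⟨hc, ht'⟩, rfl⟩

lemma treesOn_finite (s : Finset ℕ) : (treesOn s).Finite := by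
  induction s using Finset.strongInduction with
  | H s ih =>
    rcases Nat.lt_or_ge 1 s.card with hs | hs
    · refine Set.Finite.subset (Set.Finite.biUnion (Finset.finite_toSet _) fun A hA => ?_)
        (treesOn_subset_iUnion_prepend hs)
      refine Set.Finite.image _ ?_
      rcases A.eq_empty_or_nonempty with rfl | hne
      · simp [treesOn_empty]
      rcases eq_or_ne A s with rfl | hAs
      · simp [treesOn_empty]
      have hAs' := Finset.ssubset_iff_subset_ne.2 ⟨Finset.mem_powerset.1 hA, hAs⟩
      exact (ih A hAs').prod (ih _ (Finset.sdiff_ssubset (Finset.mem_powerset.1 hA) hne))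
    · rcases Finset.card_le_one_iff_subset_singleton.1 hs with ⟨a, ha⟩
      rcases Finset.subset_singleton_iff.1 ha with rfl | rfl
      · simp [treesOn_empty]
      · simp [treesOn_singleton]

noncomputable def trees (s : Finset ℕ) : Finset LTree := (treesOn_finite s).toFinset

lemma mem_trees {s : Finset ℕ} {t : LTree} : t ∈ trees s ↔ t ∈ treesOn s :=
  Set.Finite.mem_toFinset _

noncomputable def imprPoly (s : Finset ℕ) : ℕ[X] := ∑ t ∈ trees s, X ^ impr t

lemma coeff_imprPoly (s : Finset ℕ) (k : ℕ) :
    (imprPoly s).coeff k = #{t ∈ trees s | impr t = k} := by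
  simp [imprPoly, Polynomial.finsetSum_coeff, coeff_X_pow, eq_comm]

lemma imprPoly_empty : imprPoly ∅ = 0 := by
  simp [imprPoly, trees, treesOn_empty]

lemma imprPoly_singleton (a : ℕ) : imprPoly {a} = 1 := by
  simp [imprPoly, trees, treesOn_singleton, impr, improperEdges, improperEdgesAux]

lemma imprPoly_eq_sum {s : Finset ℕ} {m : ℕ} (hs : 1 < s.card) (hm : IsLeast (s : Set ℕ) m) :
    imprPoly s = ∑ A ∈ s.powerset, (if m ∈ A then X else 1) * (imprPoly A * imprPoly (s \ A)) := by
  have hdecomp : ∑ x ∈ s.powerset.sigma (fun A => trees A ×ˢ trees (s \ A)),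
      X ^ impr (prepend x.2.1 x.2.2) = imprPoly s := by
    refine Finset.sum_bij (fun x _ => prepend x.2.1 x.2.2) ?_ ?_ ?_ (fun _ _ => rfl)
    · rintro ⟨A, c, t⟩ hx
      simp only [Finset.mem_sigma, Finset.mem_powerset, Finset.mem_product, mem_trees] at hx
      exact mem_trees.2 (prepend_mem_treesOn_iff.2 ⟨A, hx.1, hx.2⟩)
    · rintro ⟨A, c, t⟩ hx ⟨A', c', t'⟩ hx' h
      simp only [Finset.mem_sigma, Finset.mem_powerset, Finset.mem_product, mem_trees] at hx hx'
      obtain ⟨rfl, rfl⟩ := prepend_inj h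
      obtain rfl : A = A' := Finset.val_injective (hx.2.1.symm.trans hx'.2.1)
      rfl
    · intro t ht
      obtain ⟨c, t', rfl⟩ := exists_prepend_eq (children_ne_nil (mem_trees.1 ht) hs)
      obtain ⟨A, hA, hc, ht'⟩ := prepend_mem_treesOn_iff.1 (mem_trees.1 ht)
      exact ⟨⟨A, c, t'⟩, by simp [hA, mem_trees, hc, ht'], rfl⟩
  rw [← hdecomp, Finset.sum_sigma]
  refine Finset.sum_congr rfl fun A hA => ?_
  rw [imprPoly, imprPoly, Finset.sum_mul_sum, ← Finset.sum_product', Finset.mul_sum]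
  refine Finset.sum_congr rfl fun p hp => ?_
  rw [Finset.mem_product, mem_trees, mem_trees] at hp
  simp only [impr_prepend, minLabel_lt_minLabel_iff (Finset.mem_powerset.1 hA) hm hp.1 hp.2]
  split_ifs <;> ring

noncomputable def imprPolyOfCard : ℕ → ℕ[X]
  | 0 => 0
  | n + 1 => (1 + X) ^ n * ((2 * n - 1)‼ : ℕ[X])

lemma sum_range_choose_smul_imprPolyOfCard (n : ℕ) :
    ∑ j ∈ range (n + 2), (n + 1).choose j • (imprPolyOfCard (j + 1) * imprPolyOfCard (n + 1 - j))
      = (1 + X) ^ n * ((2 * n + 1)‼ : ℕ[X]) := by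
  rw [← Finset.Nat.sum_antidiagonal_eq_sum_range_succ
    (fun i j => (n + 1).choose i • (imprPolyOfCard (i + 1) * imprPolyOfCard j)),
    Finset.Nat.sum_antidiagonal_succ']
  calc _ = ∑ p ∈ antidiagonal n, (1 + X) ^ n *
        (((n + 1).choose p.1 * ((2 * p.1 - 1)‼ * (2 * p.2 - 1)‼) : ℕ) : ℕ[X]) := by
        simp only [imprPolyOfCard, mul_zero, smul_zero, zero_add]
        refine sum_congr rfl fun p hp => ?_
        rw [nsmul_eq_mul, ← mem_antidiagonal.1 hp, pow_add]
        push_cast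
        ring
    _ = _ := by rw [← mul_sum, ← Nat.cast_sum, Nat.sum_antidiagonal_choose_mul_doubleFactorial]

lemma imprPoly_insert_of_isLeast {s : Finset ℕ} {m : ℕ} (hs : s.Nonempty) (hms : m ∉ s)
    (hm : IsLeast ((insert m s : Finset ℕ) : Set ℕ) m) :
    imprPoly (insert m s) =
      (X + 1) * ∑ B ∈ s.powerset, imprPoly (insert m B) * imprPoly (s \ B) := by
  have hcard : 1 < (insert m s).card := by rw [card_insert_of_notMem hms]; simp [hs.card_pos]
  rw [imprPoly_eq_sum hcard hm, sum_powerset_insert_ite_mem_mul hms]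

theorem imprPoly_eq_imprPolyOfCard (s : Finset ℕ) : imprPoly s = imprPolyOfCard s.card := by
  induction hcard : s.card using Nat.strong_induction_on generalizing s with
  | _ N ih =>
  rcases Nat.lt_or_ge 1 N with hs | hs
  · obtain ⟨n, rfl⟩ : ∃ n, N = n + 2 := ⟨N - 2, by omega⟩
    have hne : s.Nonempty := card_pos.1 (by omega)
    set m := s.min' hne
    set s' := s.erase m
    have hms : m ∈ s := min'_mem s hne
    have hs' : s'.card = n + 1 := by rw [card_erase_of_mem hms, hcard]; rfl
    have key : ∀ B ∈ s'.powerset, imprPoly (insert m B) * imprPoly (s' \ B) =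
        imprPolyOfCard (B.card + 1) * imprPolyOfCard (n + 1 - B.card) := by
      intro B hB
      rcases eq_or_ne B s' with rfl | hBs
      -- the one term outside the induction hypothesis vanishes: no tree is labeled by `∅`
      · rw [Finset.sdiff_self, imprPoly_empty, hs', Nat.sub_self, imprPolyOfCard, mul_zero,
          mul_zero]
      have hBs' := card_lt_card (Finset.ssubset_iff_subset_ne.2 ⟨mem_powerset.1 hB, hBs⟩)
      have hmB : m ∉ B := fun h => notMem_erase m s (mem_powerset.1 hB h)
      rw [ih _ (by omega) _ (card_insert_of_notMem hmB),
        ih (n + 1 - B.card) (by omega) _ (by rw [card_sdiff_of_subset (mem_powerset.1 hB), hs'])]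
    rw [← insert_erase hms,
      imprPoly_insert_of_isLeast (card_pos.1 (by omega : 0 < s'.card)) (notMem_erase m s)
        (by rw [insert_erase hms]; exact isLeast_min' s hne), sum_congr rfl key,
      sum_powerset_apply_card (fun j => imprPolyOfCard (j + 1) * imprPolyOfCard (n + 1 - j)),
      hs', sum_range_choose_smul_imprPolyOfCard, imprPolyOfCard,
      show 2 * (n + 1) - 1 = 2 * n + 1 by omega]
    ring
  · rcases Finset.card_le_one_iff_subset_singleton.1 (hcard ▸ hs) with ⟨a, ha⟩
    rcases Finset.subset_singleton_iff.1 ha with rfl | rfl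
    · simp [← hcard, imprPoly_empty, imprPolyOfCard]
    · simp [← hcard, imprPoly_singleton, imprPolyOfCard]

end LTree

open Nat

/-- For every `n ≥ 1` and `0 ≤ k ≤ n`, the number of labeled plane trees with `n`
edges having exactly `k` improper edges equals `binom(n,k) · (2n-1)!!`. -/
theorem card_planeTrees_with_k_improper (n k : ℕ) (hn : 1 ≤ n) (hk : k ≤ n) :
    Nat.card {T : LTree // LTree.IsLPT n T ∧ LTree.impr T = k}
      = n.choose k * (2 * n - 1)‼ := by
  have hlpt (T : LTree) : LTree.IsLPT n T ↔ T ∈ LTree.trees (Icc 1 (n + 1)) := by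
    rw [LTree.mem_trees, LTree.mem_treesOn, Nat.Icc_eq_range', LTree.IsLPT, Multiset.coe_eq_coe,
      add_tsub_cancel_right]
  calc Nat.card {T : LTree // LTree.IsLPT n T ∧ LTree.impr T = k}
      = #{T ∈ LTree.trees (Icc 1 (n + 1)) | LTree.impr T = k} := by
        rw [← Nat.card_eq_finsetCard]
        exact Nat.card_congr (Equiv.subtypeEquivRight fun T => by simp [hlpt])
    _ = (LTree.imprPoly (Icc 1 (n + 1))).coeff k := (LTree.coeff_imprPoly _ _).symm
    _ = n.choose k * (2 * n - 1)‼ := by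
        rw [LTree.imprPoly_eq_imprPolyOfCard, Nat.card_Icc, add_tsub_cancel_right,
          LTree.imprPolyOfCard, coeff_mul_natCast, coeff_one_add_X_pow, Nat.cast_id, Nat.cast_id]
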